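/- Let L be an odd, square-free positive integer divisible by 3. Let g ∈ ℂ^L be any eigenvector of the Zauner unitary matrix U_Z (a nonzero vector with U_Z g = λ g for some λ ∈ ℂ). Then the full Gabor system generated by g with lattice parameters a = b = 1, i.e. the family {g_{n,m} : n, m ∈ {0,…,L−1}} with g_{n,m}(l) = e^{2πiml/L} g((l−n) mod L), is spark deficient: there exists a subfamily of at most L of these L² vectors that is linearly dependent (equivalently, some set of L of its elements fails to be a basis of ℂ^L). -/

import Mathlib

open Complex

/-- `τ = -e^{iπ/L}`. -/
noncomputable def tauL (L : ℕ) : ℂ := -Complex.exp (Real.pi * Complex.I / L)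

/-- The Zauner unitary matrix `U_Z` (phase `θ = 0`), the matrix `U_G` associated to the
Zauner matrix `Z = (0, L−1; 1, L−1)` in `ℤ_L`:
`U_Z(u,v) = (1/√L) τ^{β⁻¹(α v² − 2uv + δ u²) mod L}` with `α = 0`, `β = δ = L−1`. -/
noncomputable def zaunerU (L : ℕ) : Matrix (Fin L) (Fin L) ℂ :=
  Matrix.of fun u v =>
    (1 / (Real.sqrt L : ℂ)) *
      tauL L ^
        ((((L - 1 : ℕ) : ZMod L))⁻¹ *
            ((0 : ZMod L) * ((v : ℕ) : ZMod L) ^ 2 -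
              2 * ((u : ℕ) : ZMod L) * ((v : ℕ) : ZMod L) +
              ((L - 1 : ℕ) : ZMod L) * ((u : ℕ) : ZMod L) ^ 2)).val

/-- The Gabor system element `g_{n,m}` for lattice parameters `a = b = 1`:
`g_{n,m}(l) = e^{2πiml/L} g((l−n) mod L)`. -/
noncomputable def gaborVec (L : ℕ) (g : Fin L → ℂ) (n m : Fin L) : Fin L → ℂ :=
  fun l => Complex.exp (2 * Real.pi * Complex.I * ((m : ℕ) * (l : ℕ)) / L) * g (l - n)

namespace SparkAux

noncomputable def tpow (L : ℕ) (x : ZMod L) : ℂ := tauL L ^ x.val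

variable {L : ℕ}

lemma tau_sq : tauL L ^ 2 = Complex.exp (2 * Real.pi * Complex.I / L) := by
  rw [tauL, neg_sq, sq, ← Complex.exp_add]
  congr 1
  ring

lemma odd_ne_zero (hodd : Odd L) : L ≠ 0 := by
  rintro rfl; simp [Nat.odd_iff] at hodd

lemma tau_pow_L (hodd : Odd L) : tauL L ^ L = 1 := by
  have h0 : (L : ℂ) ≠ 0 := Nat.cast_ne_zero.mpr (odd_ne_zero hodd)
  rw [tauL, neg_pow, ← Complex.exp_nat_mul]
  rw [mul_div_cancel₀ _ h0, Complex.exp_pi_mul_I, hodd.neg_one_pow]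
  ring

lemma tau_primitive (hodd : Odd L) : IsPrimitiveRoot (tauL L) L := by
  have hL0 : L ≠ 0 := odd_ne_zero hodd
  have h2c : 2 * ((L + 1) / 2) = L + 1 := by
    obtain ⟨k, rfl⟩ := hodd; omega
  have hform : tauL L = Complex.exp (2 * Real.pi * Complex.I / L) ^ ((L + 1) / 2) := by
    calc tauL L = tauL L ^ (L + 1) := by rw [pow_succ, tau_pow_L hodd, one_mul]
    _ = (tauL L ^ 2) ^ ((L + 1) / 2) := by rw [← pow_mul, h2c]
    _ = _ := by rw [tau_sq]
  have hcop : Nat.Coprime ((L + 1) / 2) L := by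
    have hd1 : Nat.gcd ((L + 1) / 2) L ∣ (L + 1) / 2 := Nat.gcd_dvd_left _ _
    have hd2 : Nat.gcd ((L + 1) / 2) L ∣ L := Nat.gcd_dvd_right _ _
    have hd3 : Nat.gcd ((L + 1) / 2) L ∣ L + 1 := by
      have := Dvd.dvd.mul_left hd1 2
      rwa [h2c] at this
    have : Nat.gcd ((L + 1) / 2) L ∣ 1 := by
      have := Nat.dvd_sub hd3 hd2
      simpa using this
    exact Nat.dvd_one.mp this
  rw [hform]
  exact (Complex.isPrimitiveRoot_exp L hL0).pow_of_coprime _ hcop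

lemma tpow_natCast (hodd : Odd L) (a : ℕ) : tpow L (a : ZMod L) = tauL L ^ a := by
  haveI : NeZero L := ⟨odd_ne_zero hodd⟩
  rw [tpow, ZMod.val_natCast]
  conv_rhs => rw [← Nat.mod_add_div a L]
  rw [pow_add, pow_mul, tau_pow_L hodd, one_pow, mul_one]

lemma tpow_add (hodd : Odd L) (x y : ZMod L) :
    tpow L (x + y) = tpow L x * tpow L y := by
  haveI : NeZero L := ⟨odd_ne_zero hodd⟩
  have hxy : x + y = ((x.val + y.val : ℕ) : ZMod L) := by
    push_cast
    rw [ZMod.natCast_rightInverse x, ZMod.natCast_rightInverse y]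
  rw [hxy, tpow_natCast hodd, pow_add, tpow, tpow]

lemma tpow_zero (hodd : Odd L) : tpow L 0 = 1 := by
  haveI : NeZero L := ⟨odd_ne_zero hodd⟩
  simp [tpow, ZMod.val_zero]

lemma tpow_ne_zero (x : ZMod L) : tpow L x ≠ 0 := by
  simp [tpow, tauL, pow_ne_zero, Complex.exp_ne_zero]

lemma tpow_eq_one_iff (hodd : Odd L) (x : ZMod L) : tpow L x = 1 ↔ x = 0 := by
  haveI : NeZero L := ⟨odd_ne_zero hodd⟩
  rw [tpow, (tau_primitive hodd).pow_eq_one_iff_dvd]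
  constructor
  · intro h
    exact (ZMod.val_eq_zero x).mp (Nat.eq_zero_of_dvd_of_lt h (ZMod.val_lt x))
  · rintro rfl
    simp [ZMod.val_zero]

lemma star_tpow (hodd : Odd L) (x : ZMod L) :
    (starRingEnd ℂ) (tpow L x) = tpow L (-x) := by
  haveI : NeZero L := ⟨odd_ne_zero hodd⟩
  have h1 : tpow L x * tpow L (-x) = 1 := by
    rw [← tpow_add hodd, add_neg_cancel, tpow_zero hodd]
  have habs : ‖tpow L x‖ = 1 := by
    have : ‖tauL L‖ = 1 := by
      have harg : (Real.pi : ℂ) * Complex.I / L = ((Real.pi / L : ℝ) : ℂ) * Complex.I := by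
        push_cast; ring
      rw [tauL, norm_neg, harg, Complex.norm_exp_ofReal_mul_I]
    simp [tpow, map_pow, this]
  rw [← Complex.inv_eq_conj habs]
  exact inv_eq_of_mul_eq_one_right h1

lemma sum_tpow [NeZero L] (hodd : Odd L) (c : ZMod L) (hc : c ≠ 0) :
    ∑ y : ZMod L, tpow L (c * y) = 0 := by
  have key : tpow L c * ∑ y : ZMod L, tpow L (c * y) = ∑ y : ZMod L, tpow L (c * y) := by
    rw [Finset.mul_sum]
    refine Fintype.sum_bijective (fun y : ZMod L => y + 1) (Equiv.addRight 1).bijective _ _ ?_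
    intro y
    rw [← tpow_add hodd]
    congr 1
    ring
  have h2 : (tpow L c - 1) * ∑ y : ZMod L, tpow L (c * y) = 0 := by
    linear_combination key
  rcases mul_eq_zero.mp h2 with h | h
  · exact absurd ((tpow_eq_one_iff hodd c).mp (by linear_combination h)) hc
  · exact h

end SparkAux

namespace SparkAux2
open SparkAux

variable {L : ℕ}

/-- cast `Fin L → ZMod L`. -/
def fz (x : Fin L) : ZMod L := ((x : ℕ) : ZMod L)

/-- cast `ZMod L → Fin L`. -/
def zf [NeZero L] (x : ZMod L) : Fin L := ⟨x.val, ZMod.val_lt x⟩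

lemma fz_zf [NeZero L] (x : ZMod L) : fz (zf x) = x := ZMod.natCast_rightInverse x

lemma zf_fz [NeZero L] (x : Fin L) : zf (fz x) = x := by
  apply Fin.ext
  exact ZMod.val_cast_of_lt x.isLt

lemma fz_inj [NeZero L] : Function.Injective (fz : Fin L → ZMod L) :=
  Function.LeftInverse.injective zf_fz

lemma fz_bij [NeZero L] : Function.Bijective (fz : Fin L → ZMod L) :=
  ⟨fz_inj, fun x => ⟨zf x, fz_zf x⟩⟩

lemma fz_zero [NeZero L] : fz (0 : Fin L) = 0 := by
  simp [fz]

lemma fz_add [NeZero L] (x y : Fin L) : fz (x + y) = fz x + fz y := by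
  unfold fz
  rw [Fin.add_def]
  show (((x.val + y.val) % L : ℕ) : ZMod L) = _
  rw [ZMod.natCast_mod, Nat.cast_add]

lemma fz_sub [NeZero L] (x y : Fin L) : fz (x - y) = fz x - fz y := by
  unfold fz
  rw [Fin.sub_def]
  show (((L - y.val + x.val) % L : ℕ) : ZMod L) = _
  rw [ZMod.natCast_mod, Nat.cast_add, Nat.cast_sub (le_of_lt y.isLt), ZMod.natCast_self]
  ring

lemma zaunerU_apply (hL : 0 < L) (u v : Fin L) :
    zaunerU L u v = (1 / (Real.sqrt L : ℂ)) * tpow L (fz u ^ 2 + 2 * fz u * fz v) := by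
  have hm1 : ((L - 1 : ℕ) : ZMod L) = -1 := by
    have h : ((L - 1 : ℕ) : ZMod L) + 1 = 0 := by
      rw [show ((1 : ZMod L) = ((1:ℕ) : ZMod L)) by push_cast; ring, ← Nat.cast_add,
        Nat.sub_add_cancel hL, ZMod.natCast_self]
    linear_combination h
  have hu : IsUnit (-1 : ZMod L) := IsUnit.neg isUnit_one
  have hinv : (-1 : ZMod L)⁻¹ = -1 := by
    have h := ZMod.inv_mul_of_unit (-1 : ZMod L) hu
    linear_combination -h
  have he : (-1 : ZMod L) * ((0 : ZMod L) * ((v : ℕ) : ZMod L) ^ 2 -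
      2 * ((u : ℕ) : ZMod L) * ((v : ℕ) : ZMod L) + (-1) * ((u : ℕ) : ZMod L) ^ 2)
      = fz u ^ 2 + 2 * fz u * fz v := by
    unfold fz; ring
  show (1 / (Real.sqrt L : ℂ)) * tauL L ^ (_ : ZMod L).val = _
  rw [hm1, hinv, he]
  rfl

lemma gaborVec_apply (hodd : Odd L) (g : Fin L → ℂ) (n m l : Fin L) :
    gaborVec L g n m l = tpow L (2 * fz m * fz l) * g (l - n) := by
  haveI : NeZero L := ⟨odd_ne_zero hodd⟩
  unfold gaborVec
  congr 1
  have hcast : (2 * fz m * fz l : ZMod L) = ((2 * (m.val * l.val) : ℕ) : ZMod L) := by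
    unfold fz; push_cast; ring
  rw [hcast, tpow_natCast hodd, pow_mul, tau_sq, ← Complex.exp_nat_mul]
  congr 1
  push_cast
  ring
end SparkAux2

namespace SparkAux3
open SparkAux SparkAux2

variable {L : ℕ}

/-- Zauner action on time-frequency indices: `(n,m) ↦ (−m, n−m)`. -/
def sg [NeZero L] (p : Fin L × Fin L) : Fin L × Fin L :=
  (zf (-fz p.2), zf (fz p.1 - fz p.2))

lemma key [NeZero L] (hodd : Odd L) (hL : 0 < L) (g : Fin L → ℂ) (lam : ℂ)
    (heig : (zaunerU L).mulVec g = lam • g) (n m : Fin L) :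
    (zaunerU L).mulVec (gaborVec L g n m)
      = (lam * tpow L (2 * fz m * fz n - fz m ^ 2)) •
          gaborVec L g (sg (n, m)).1 (sg (n, m)).2 := by
  haveI : NeZero L := ⟨odd_ne_zero hodd⟩
  funext u
  have hgu : ∀ w : Fin L, (∑ k, zaunerU L w k * g k) = lam * g w := by
    intro w
    have h := congrFun heig w
    simpa [Matrix.mulVec, dotProduct] using h
  have hfz1 : fz (sg (n, m) : Fin L × Fin L).1 = - fz m := fz_zf _
  have hfz2 : fz (sg (n, m) : Fin L × Fin L).2 = fz n - fz m := fz_zf _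
  have hsub : fz (u - (sg (n, m) : Fin L × Fin L).1) = fz u + fz m := by
    rw [fz_sub, hfz1]; ring
  -- the right-hand side as a sum over k
  have hRHS : ((lam * tpow L (2 * fz m * fz n - fz m ^ 2)) •
        gaborVec L g (sg (n, m)).1 (sg (n, m)).2) u
      = tpow L (2 * fz m * fz n - fz m ^ 2) * tpow L (2 * (fz n - fz m) * fz u) *
          ∑ k, (1 / (Real.sqrt L : ℂ)) *
            tpow L ((fz u + fz m) ^ 2 + 2 * (fz u + fz m) * fz k) * g k := by
    rw [Pi.smul_apply, smul_eq_mul, gaborVec_apply hodd, hfz2]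
    have hsum : (∑ k, (1 / (Real.sqrt L : ℂ)) *
          tpow L ((fz u + fz m) ^ 2 + 2 * (fz u + fz m) * fz k) * g k)
        = lam * g (u - (sg (n, m) : Fin L × Fin L).1) := by
      rw [← hgu (u - (sg (n, m) : Fin L × Fin L).1)]
      refine Finset.sum_congr rfl fun k _ => ?_
      rw [zaunerU_apply hL, hsub]
    rw [hsum]
    ring
  rw [hRHS]
  calc (zaunerU L).mulVec (gaborVec L g n m) u
      = ∑ v, zaunerU L u v * gaborVec L g n m v := by
        simp [Matrix.mulVec, dotProduct]
    _ = ∑ k, zaunerU L u (k + n) * gaborVec L g n m (k + n) :=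
        (Fintype.sum_bijective (fun k : Fin L => k + n) (Equiv.addRight n).bijective
          (fun k => zaunerU L u (k + n) * gaborVec L g n m (k + n))
          (fun v => zaunerU L u v * gaborVec L g n m v) (fun k => rfl)).symm
    _ = ∑ k, (1 / (Real.sqrt L : ℂ)) * tpow L (fz u ^ 2 + 2 * fz u * (fz k + fz n)) *
          (tpow L (2 * fz m * (fz k + fz n)) * g k) := by
        refine Finset.sum_congr rfl fun k _ => ?_
        rw [zaunerU_apply hL, gaborVec_apply hodd, fz_add, add_sub_cancel_right]
    _ = ∑ k, tpow L (2 * fz m * fz n - fz m ^ 2) * tpow L (2 * (fz n - fz m) * fz u) *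
          ((1 / (Real.sqrt L : ℂ)) *
            tpow L ((fz u + fz m) ^ 2 + 2 * (fz u + fz m) * fz k) * g k) := by
        refine Finset.sum_congr rfl fun k _ => ?_
        calc (1 / (Real.sqrt L : ℂ)) * tpow L (fz u ^ 2 + 2 * fz u * (fz k + fz n)) *
              (tpow L (2 * fz m * (fz k + fz n)) * g k)
            = (1 / (Real.sqrt L : ℂ)) * g k *
                (tpow L (fz u ^ 2 + 2 * fz u * (fz k + fz n)) *
                  tpow L (2 * fz m * (fz k + fz n))) := by ring
          _ = (1 / (Real.sqrt L : ℂ)) * g k *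
                tpow L (fz u ^ 2 + 2 * fz u * (fz k + fz n) + 2 * fz m * (fz k + fz n)) := by
              rw [tpow_add hodd (fz u ^ 2 + 2 * fz u * (fz k + fz n)) (2 * fz m * (fz k + fz n))]
          _ = (1 / (Real.sqrt L : ℂ)) * g k *
                tpow L ((2 * fz m * fz n - fz m ^ 2) + (2 * (fz n - fz m) * fz u +
                  ((fz u + fz m) ^ 2 + 2 * (fz u + fz m) * fz k))) := by
              congr 1
              ring
          _ = (1 / (Real.sqrt L : ℂ)) * g k *
                (tpow L (2 * fz m * fz n - fz m ^ 2) * (tpow L (2 * (fz n - fz m) * fz u) *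
                  tpow L ((fz u + fz m) ^ 2 + 2 * (fz u + fz m) * fz k))) := by
              rw [tpow_add hodd (2 * fz m * fz n - fz m ^ 2) (2 * (fz n - fz m) * fz u +
                  ((fz u + fz m) ^ 2 + 2 * (fz u + fz m) * fz k)),
                tpow_add hodd (2 * (fz n - fz m) * fz u)
                  ((fz u + fz m) ^ 2 + 2 * (fz u + fz m) * fz k)]
          _ = _ := by ring
    _ = tpow L (2 * fz m * fz n - fz m ^ 2) * tpow L (2 * (fz n - fz m) * fz u) *
          ∑ k, (1 / (Real.sqrt L : ℂ)) *
            tpow L ((fz u + fz m) ^ 2 + 2 * (fz u + fz m) * fz k) * g k := by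
        rw [Finset.mul_sum]

end SparkAux3

namespace SparkAux4
open SparkAux SparkAux2

variable {L : ℕ}

lemma two_isUnit (hodd : Odd L) : IsUnit (2 : ZMod L) := by
  have h2 : ((2 : ℕ) : ZMod L) = (2 : ZMod L) := by push_cast; ring
  rw [← h2, ZMod.isUnit_iff_coprime]
  exact Nat.coprime_two_left.mpr hodd

lemma trace_zaunerU_ne_zero (hL : 0 < L) (hodd : Odd L) :
    Matrix.trace (zaunerU L) ≠ 0 := by
  haveI : NeZero L := ⟨hL.ne'⟩
  have hdiag : Matrix.trace (zaunerU L)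
      = (1 / (Real.sqrt L : ℂ)) * ∑ x : ZMod L, tpow L (3 * x ^ 2) := by
    rw [Matrix.trace, Finset.mul_sum]
    refine Fintype.sum_bijective fz fz_bij _ _ fun u => ?_
    rw [Matrix.diag_apply, zaunerU_apply hL]
    congr 2
    ring
  set T := ∑ x : ZMod L, tpow L (3 * x ^ 2) with hT
  have hstar : (starRingEnd ℂ) T = ∑ y : ZMod L, tpow L (-(3 * y ^ 2)) := by
    rw [map_sum]
    exact Finset.sum_congr rfl fun y _ => star_tpow hodd _
  have hTT : T * (starRingEnd ℂ) T
      = (L : ℂ) * ((Finset.univ.filter fun h : ZMod L => 6 * h = 0).card : ℂ) := by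
    calc T * (starRingEnd ℂ) T
        = ∑ x : ZMod L, ∑ y : ZMod L, tpow L (3 * x ^ 2) * tpow L (-(3 * y ^ 2)) := by
          rw [hstar, Finset.sum_mul_sum]
      _ = ∑ y : ZMod L, ∑ x : ZMod L, tpow L (3 * x ^ 2) * tpow L (-(3 * y ^ 2)) :=
          Finset.sum_comm
      _ = ∑ y : ZMod L, ∑ h : ZMod L, tpow L (3 * h ^ 2) * tpow L ((6 * h) * y) := by
          refine Finset.sum_congr rfl fun y _ => ?_
          refine (Fintype.sum_bijective (fun h : ZMod L => y + h) (Equiv.addLeft y).bijective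
            (fun h => tpow L (3 * h ^ 2) * tpow L ((6 * h) * y))
            (fun x => tpow L (3 * x ^ 2) * tpow L (-(3 * y ^ 2))) fun h => ?_).symm
          show tpow L (3 * h ^ 2) * tpow L ((6 * h) * y)
            = tpow L (3 * (y + h) ^ 2) * tpow L (-(3 * y ^ 2))
          rw [← tpow_add hodd, ← tpow_add hodd]
          congr 1
          ring
      _ = ∑ h : ZMod L, tpow L (3 * h ^ 2) * ∑ y : ZMod L, tpow L ((6 * h) * y) := by
          rw [Finset.sum_comm]
          exact Finset.sum_congr rfl fun h _ => (Finset.mul_sum _ _ _).symm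
      _ = ∑ h : ZMod L, if (6 * h : ZMod L) = 0 then (L : ℂ) else 0 := by
          refine Finset.sum_congr rfl fun h _ => ?_
          by_cases h6 : (6 * h : ZMod L) = 0
          · rw [if_pos h6]
            have h3h : (3 * h : ZMod L) = 0 := by
              have h2cancel : (2 : ZMod L) * (3 * h) = 2 * 0 := by linear_combination h6
              exact (two_isUnit hodd).mul_left_cancel h2cancel
            have h3h2 : (3 * h ^ 2 : ZMod L) = 0 := by
              have hrw : (3 * h ^ 2 : ZMod L) = (3 * h) * h := by ring
              rw [hrw, h3h, zero_mul]
            have hy : ∀ y : ZMod L, tpow L ((6 * h) * y) = 1 := fun y => by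
              rw [h6, zero_mul, tpow_zero hodd]
            rw [h3h2, tpow_zero hodd, one_mul, Finset.sum_congr rfl fun y _ => hy y]
            simp [ZMod.card]
          · rw [if_neg h6, sum_tpow hodd _ h6, mul_zero]
      _ = (L : ℂ) * ((Finset.univ.filter fun h : ZMod L => 6 * h = 0).card : ℂ) := by
          rw [← Finset.sum_filter, Finset.sum_const, nsmul_eq_mul, mul_comm]
  have hcard_pos : 0 < (Finset.univ.filter fun h : ZMod L => 6 * h = 0).card :=
    Finset.card_pos.mpr ⟨0, by simp⟩
  have hTne : T ≠ 0 := by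
    intro h0
    rw [h0, zero_mul] at hTT
    exact mul_ne_zero (Nat.cast_ne_zero.mpr hL.ne')
      (Nat.cast_ne_zero.mpr hcard_pos.ne') hTT.symm
  rw [hdiag]
  refine mul_ne_zero ?_ hTne
  refine div_ne_zero one_ne_zero ?_
  rw [Complex.ofReal_ne_zero]
  positivity

end SparkAux4

namespace SparkAux2
variable {L : ℕ}
lemma zf_zero [NeZero L] : zf (0 : ZMod L) = (0 : Fin L) := by
  apply Fin.ext
  simp [zf, ZMod.val_zero]
end SparkAux2


open SparkAux SparkAux2 SparkAux3 SparkAux4 in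
/-- If `L` is an odd, square-free positive integer divisible by `3`, and `g ∈ ℂ^L` is any
eigenvector of the Zauner unitary `U_Z`, then the full Gabor system generated by `g`
(with `a = b = 1`) is spark deficient: some subfamily of at most `L` of the `L²` vectors
`g_{n,m}` is linearly dependent. -/
theorem star_gabor_frame_spark_deficient (L : ℕ) (hL : 0 < L) (hodd : Odd L)
    (h3 : 3 ∣ L) (hsf : Squarefree L) (g : Fin L → ℂ) (hg : g ≠ 0) (lam : ℂ)
    (heig : (zaunerU L).mulVec g = lam • g) :
    ∃ S : Finset (Fin L × Fin L), S.card ≤ L ∧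
      ¬ LinearIndependent ℂ (fun p : S => gaborVec L g p.1.1 p.1.2) := by
  classical
  haveI : NeZero L := ⟨hL.ne'⟩
  obtain ⟨K, hK⟩ := h3
  have hK1 : 1 ≤ K := by omega
  let f : Fin K → Fin L := fun i => ⟨i.val + 1, by have := i.isLt; omega⟩
  have hfinj : Function.Injective f := by
    intro a b hab
    have h := congrArg Fin.val hab
    simp only [f] at h
    exact Fin.ext (by omega)
  let A : Finset (Fin L) := Finset.univ.image f
  have hAcard : A.card = K := by
    rw [Finset.card_image_of_injective _ hfinj, Finset.card_univ, Fintype.card_fin]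
  have hA0 : ∀ n ∈ A, n ≠ (0 : Fin L) := by
    intro n hn h0
    obtain ⟨i, -, rfl⟩ := Finset.mem_image.mp hn
    have h := congrArg Fin.val h0
    simp only [f, Fin.val_zero] at h
    omega
  let nneg : Fin L → Fin L := fun n => zf (-fz n)
  let orb : Fin L → Finset (Fin L × Fin L) := fun n => {(n, 0), (0, n), (nneg n, nneg n)}
  let S : Finset (Fin L × Fin L) := A.biUnion orb
  have hfzne : ∀ n : Fin L, n ≠ 0 → fz n ≠ 0 := by
    intro n hn h
    exact hn (fz_inj (show fz n = fz 0 by rw [fz_zero]; exact h))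
  have hnneg0 : ∀ n : Fin L, n ≠ 0 → nneg n ≠ 0 := by
    intro n hn h0
    have h := congrArg fz h0
    rw [fz_zf, fz_zero] at h
    exact hfzne n hn (neg_eq_zero.mp h)
  have hnneginj : ∀ n n' : Fin L, nneg n = nneg n' → n = n' := by
    intro n n' h
    have h2 := congrArg fz h
    rw [fz_zf, fz_zf] at h2
    exact fz_inj (neg_injective h2)
  have horbcard : ∀ n : Fin L, n ≠ 0 → (orb n).card = 3 := by
    intro n hn
    have h1 : nneg n ≠ 0 := hnneg0 n hn
    show ({(n, 0), (0, n), (nneg n, nneg n)} : Finset (Fin L × Fin L)).card = 3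
    rw [Finset.card_insert_of_notMem, Finset.card_insert_of_notMem,
      Finset.card_singleton]
    · simp only [Finset.mem_singleton]
      intro h
      exact h1 (congrArg Prod.fst h).symm
    · simp only [Finset.mem_insert, Finset.mem_singleton]
      rintro (h | h)
      · exact hn (congrArg Prod.fst h)
      · exact h1 (congrArg Prod.snd h).symm
  have hdisj : ∀ x ∈ A, ∀ y ∈ A, x ≠ y → Disjoint (orb x) (orb y) := by
    intro x hx y hy hxy
    rw [Finset.disjoint_left]
    intro p hp hq
    have hx0 := hA0 x hx
    have hy0 := hA0 y hy
    have hnx0 := hnneg0 x hx0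
    have hny0 := hnneg0 y hy0
    have hnxy : nneg x ≠ nneg y := fun h => hxy (hnneginj x y h)
    simp only [orb, Finset.mem_insert, Finset.mem_singleton] at hp hq
    rcases hp with rfl | rfl | rfl <;> rcases hq with h | h | h <;>
      rw [Prod.mk.injEq] at h <;> obtain ⟨h1, h2⟩ := h
    · exact hxy h1
    · exact hx0 h1
    · exact hny0 h2.symm
    · exact hy0 h1.symm
    · exact hxy h2
    · exact hny0 h1.symm
    · exact hnx0 h2
    · exact hnx0 h1
    · exact hnxy h1
  have hScard : S.card = L := by
    show (A.biUnion orb).card = L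
    rw [Finset.card_biUnion hdisj,
      Finset.sum_congr rfl (fun n hn => horbcard n (hA0 n hn)),
      Finset.sum_const, hAcard, smul_eq_mul]
    omega
  have hsgS : ∀ p ∈ S, sg p ∈ S ∧ sg p ≠ p := by
    intro p hp
    obtain ⟨n, hnA, hporb⟩ := Finset.mem_biUnion.mp hp
    have hn0 := hA0 n hnA
    have hnn0 := hnneg0 n hn0
    have hsub : ∀ q ∈ orb n, q ∈ S := fun q hq => Finset.mem_biUnion.mpr ⟨n, hnA, hq⟩
    have hsg1 : sg ((n : Fin L), (0 : Fin L)) = (0, n) := by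
      show (zf (-fz (0 : Fin L)), zf (fz n - fz (0 : Fin L))) = ((0 : Fin L), n)
      rw [fz_zero, neg_zero, sub_zero, zf_zero, zf_fz]
    have hsg2 : sg (((0 : Fin L), n) : Fin L × Fin L) = (nneg n, nneg n) := by
      show (zf (-fz n), zf (fz (0 : Fin L) - fz n)) = (nneg n, nneg n)
      rw [fz_zero, zero_sub]
    have hsg3 : sg ((nneg n, nneg n) : Fin L × Fin L) = (n, 0) := by
      show (zf (-fz (nneg n)), zf (fz (nneg n) - fz (nneg n))) = (n, (0 : Fin L))
      have hfznn : fz (nneg n) = -fz n := fz_zf _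
      rw [hfznn, neg_neg, zf_fz, sub_self, zf_zero]
    simp only [orb, Finset.mem_insert, Finset.mem_singleton] at hporb
    rcases hporb with rfl | rfl | rfl
    · refine ⟨hsg1 ▸ hsub _ (by simp [orb]), ?_⟩
      rw [hsg1]
      intro h
      exact hn0 (congrArg Prod.fst h).symm
    · refine ⟨hsg2 ▸ hsub _ (by simp [orb]), ?_⟩
      rw [hsg2]
      intro h
      exact hnn0 (congrArg Prod.fst h)
    · refine ⟨hsg3 ▸ hsub _ (by simp [orb]), ?_⟩
      rw [hsg3]
      intro h
      exact hnn0 (congrArg Prod.snd h).symm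
  refine ⟨S, le_of_eq hScard, ?_⟩
  intro hli
  have hScard' : Fintype.card (↥S) = Module.finrank ℂ (Fin L → ℂ) := by
    rw [Fintype.card_coe, hScard, Module.finrank_pi, Fintype.card_fin]
  haveI : Nonempty (↥S) := by
    have hpos : 0 < S.card := by omega
    obtain ⟨x, hx⟩ := Finset.card_pos.mp hpos
    exact ⟨⟨x, hx⟩⟩
  let B := basisOfLinearIndependentOfCardEqFinrank hli hScard'
  have hB : ∀ p : ↥S, B p = gaborVec L g p.1.1 p.1.2 :=
    fun p => congrFun (coe_basisOfLinearIndependentOfCardEqFinrank hli hScard') p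
  have h1 : LinearMap.trace ℂ (Fin L → ℂ) (Matrix.toLin' (zaunerU L))
      = (zaunerU L).trace := by
    rw [LinearMap.trace_eq_matrix_trace ℂ (Pi.basisFun ℂ (Fin L)),
      LinearMap.toMatrix_eq_toMatrix', LinearMap.toMatrix'_toLin']
  have h2 : LinearMap.trace ℂ (Fin L → ℂ) (Matrix.toLin' (zaunerU L)) = 0 := by
    rw [LinearMap.trace_eq_matrix_trace ℂ B, Matrix.trace]
    refine Finset.sum_eq_zero fun p _ => ?_
    rw [Matrix.diag_apply, LinearMap.toMatrix_apply, Matrix.toLin'_apply, hB p]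
    obtain ⟨hmem, hne⟩ := hsgS p.1 p.2
    have hq : (⟨sg p.1, hmem⟩ : ↥S) ≠ p := fun h => hne (congrArg Subtype.val h)
    have hkey := key hodd hL g lam heig p.1.1 p.1.2
    rw [hkey, show gaborVec L g (sg ((p : Fin L × Fin L).1, (p : Fin L × Fin L).2)).1
        (sg ((p : Fin L × Fin L).1, (p : Fin L × Fin L).2)).2
      = B ⟨sg p.1, hmem⟩ from (hB ⟨sg p.1, hmem⟩).symm]
    rw [map_smul, Module.Basis.repr_self]
    simp [Finsupp.single_apply, hq]
  exact trace_zaunerU_ne_zero hL hodd (h1 ▸ h2)
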